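/- arXiv:1601.01347 — 6 statements merged into one kernel-verified Lean document; each statement's English description precedes it below -/
import Mathlib

section
/- Let f : ℕ → ℝ with f(0) = 0 and f(1) ≠ 0, and let k, n be nonnegative integers with n > k. Then C(k,n)_f = (1/(f(1)·(n-k))) · Σ_{s≥1} (k+1 - (n+1)/(s+1)) · (s+1) · f(s+1) · C(k, n-s)_f. -/
open Finset

/-- Total weight of all `f`-weighted integer compositions of `n` with `k` parts. -/
noncomputable def wcomp (f : ℕ → ℝ) (k n : ℕ) : ℝ :=
  ∑ π ∈ Finset.Nat.antidiagonalTuple k n, ∏ i, f (π i)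

/-- The partial Bell polynomial `B_{n,k}` in the indeterminates `x 1, …, x (n-k+1)`. -/
noncomputable def pBell (x : ℕ → ℝ) (n k : ℕ) : ℝ :=
  ∑ ℓ ∈ (Fintype.piFinset fun _ : Fin (n - k + 1) => Finset.range (n + 1)).filter
      (fun ℓ => (∑ j, (j.1 + 1) * ℓ j) = n ∧ (∑ j, ℓ j) = k),
    (n.factorial : ℝ) / (∏ j, ((ℓ j).factorial : ℝ)) *
      ∏ j, (x (j.1 + 1) / ((j.1 + 1).factorial : ℝ)) ^ (ℓ j)

lemma split (f : ℕ → ℝ) (g : ℕ → ℝ) (k m : ℕ) :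
    ∑ π ∈ Finset.Nat.antidiagonalTuple (k+1) m, g (π 0) * ∏ i, f (π i)
      = ∑ p ∈ Finset.HasAntidiagonal.antidiagonal m, g p.1 * f p.1 * wcomp f k p.2 := by
  rw [show (∑ p ∈ Finset.HasAntidiagonal.antidiagonal m, g p.1 * f p.1 * wcomp f k p.2)
      = ∑ p ∈ Finset.HasAntidiagonal.antidiagonal m, ∑ τ ∈ Finset.Nat.antidiagonalTuple k p.2,
          g p.1 * f p.1 * ∏ i, f (τ i) from by
    simp [wcomp, Finset.mul_sum]]
  rw [Finset.sum_sigma']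
  refine Finset.sum_nbij' (fun π => ⟨(π 0, ∑ i, π (Fin.succ i)), Fin.tail π⟩)
    (fun q => Fin.cons q.1.1 q.2) ?_ ?_ ?_ ?_ ?_
  · intro π hπ
    rw [Finset.Nat.mem_antidiagonalTuple] at hπ
    simp only [Finset.mem_sigma, Finset.HasAntidiagonal.mem_antidiagonal, Finset.Nat.mem_antidiagonalTuple]
    refine ⟨?_, rfl⟩
    rw [← hπ, Fin.sum_univ_succ]
  · intro q hq
    rw [Finset.mem_sigma, Finset.HasAntidiagonal.mem_antidiagonal, Finset.Nat.mem_antidiagonalTuple] at hq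
    rw [Finset.Nat.mem_antidiagonalTuple, Fin.sum_univ_succ]
    simp [hq.2, hq.1]
  · intro π hπ
    simp [Fin.cons_self_tail]
  · intro q hq
    rw [Finset.mem_sigma, Finset.HasAntidiagonal.mem_antidiagonal, Finset.Nat.mem_antidiagonalTuple] at hq
    obtain ⟨⟨a, b⟩, τ⟩ := q
    simp only [Finset.Nat.mem_antidiagonalTuple] at hq
    simp [hq.2]
  · intro π hπ
    simp only [Fin.cons_zero]
    rw [Fin.prod_univ_succ, ← mul_assoc]
    rfl

lemma sym (f : ℕ → ℝ) (k m : ℕ) (i : Fin (k+1)) :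
    ∑ π ∈ Finset.Nat.antidiagonalTuple (k+1) m, (π i : ℝ) * ∏ j, f (π j)
      = ∑ π ∈ Finset.Nat.antidiagonalTuple (k+1) m, (π 0 : ℝ) * ∏ j, f (π j) := by
  refine Finset.sum_nbij' (fun π => π ∘ Equiv.swap 0 i) (fun π => π ∘ Equiv.swap 0 i)
    ?_ ?_ ?_ ?_ ?_
  · intro π hπ
    rw [Finset.Nat.mem_antidiagonalTuple] at hπ ⊢
    rw [← hπ]
    exact Equiv.sum_comp (Equiv.swap 0 i) π
  · intro π hπ
    rw [Finset.Nat.mem_antidiagonalTuple] at hπ ⊢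
    rw [← hπ]
    exact Equiv.sum_comp (Equiv.swap 0 i) π
  · intro π _
    ext j
    simp [Function.comp]
  · intro π _
    ext j
    simp [Function.comp]
  · intro π _
    simp only [Function.comp_apply, Equiv.swap_apply_left]
    congr 1
    exact (Equiv.prod_comp (Equiv.swap 0 i) (fun j => f (π j))).symm

lemma key (f : ℕ → ℝ) (k m : ℕ) :
    ∑ p ∈ Finset.HasAntidiagonal.antidiagonal m, ((m : ℝ) - ((k:ℝ)+1) * p.1) * f p.1 * wcomp f k p.2
      = 0 := by
  have h1 : ∑ π ∈ Finset.Nat.antidiagonalTuple (k+1) m, (m : ℝ) * ∏ i, f (π i)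
      = ∑ π ∈ Finset.Nat.antidiagonalTuple (k+1) m, ((k:ℝ)+1) * (π 0 : ℝ) * ∏ i, f (π i) := by
    have h2 : ∀ π ∈ Finset.Nat.antidiagonalTuple (k+1) m,
        (m : ℝ) * ∏ i, f (π i) = ∑ i : Fin (k+1), (π i : ℝ) * ∏ j, f (π j) := by
      intro π hπ
      rw [Finset.Nat.mem_antidiagonalTuple] at hπ
      rw [← Finset.sum_mul, ← Nat.cast_sum, hπ]
    rw [Finset.sum_congr rfl h2, Finset.sum_comm]
    have h3 : ∀ i ∈ (Finset.univ : Finset (Fin (k+1))),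
        ∑ π ∈ Finset.Nat.antidiagonalTuple (k+1) m, (π i : ℝ) * ∏ j, f (π j)
        = ∑ π ∈ Finset.Nat.antidiagonalTuple (k+1) m, (π 0 : ℝ) * ∏ j, f (π j) :=
      fun i _ => sym f k m i
    rw [Finset.sum_congr rfl h3, Finset.sum_const, card_univ, Fintype.card_fin]
    rw [Finset.smul_sum]
    apply Finset.sum_congr rfl
    intro π _
    push_cast
    ring
  have e1 := split f (fun _ => (m : ℝ)) k m
  have e2 := split f (fun s => ((k:ℝ)+1) * (s : ℝ)) k m
  have : ∑ p ∈ Finset.HasAntidiagonal.antidiagonal m, (m:ℝ) * f p.1 * wcomp f k p.2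
      = ∑ p ∈ Finset.HasAntidiagonal.antidiagonal m, (((k:ℝ)+1) * (p.1:ℝ)) * f p.1 * wcomp f k p.2 := by
    rw [← e1, ← e2]
    convert h1 using 2 with π
  calc ∑ p ∈ Finset.HasAntidiagonal.antidiagonal m, ((m : ℝ) - ((k:ℝ)+1) * p.1) * f p.1 * wcomp f k p.2
      = ∑ p ∈ Finset.HasAntidiagonal.antidiagonal m, ((m:ℝ) * f p.1 * wcomp f k p.2
          - (((k:ℝ)+1) * (p.1:ℝ)) * f p.1 * wcomp f k p.2) := by
        apply Finset.sum_congr rfl; intro p _; ring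
    _ = 0 := by rw [Finset.sum_sub_distrib, this, sub_self]

theorem wcomp_depril (f : ℕ → ℝ) (k n : ℕ) (hf0 : f 0 = 0) (hf1 : f 1 ≠ 0)
    (hkn : k < n) :
    wcomp f k n =
      1 / (f 1 * ((n : ℝ) - (k : ℝ))) *
        ∑ s ∈ Finset.Icc 1 n,
          (((k : ℝ) + 1) - ((n : ℝ) + 1) / ((s : ℝ) + 1)) * ((s : ℝ) + 1) * f (s + 1) *
            wcomp f k (n - s) := by
  have key1 := key f k (n+1)
  rw [Finset.Nat.sum_antidiagonal_eq_sum_range_succ_mk] at key1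
  -- peel s = 0
  rw [Finset.sum_range_succ'] at key1
  simp only [Nat.cast_zero, mul_zero, sub_zero, hf0, mul_zero, zero_mul, add_zero] at key1
  -- now key1 : ∑ t ∈ range (n+1), ((n+1:ℝ) - (k+1)*(t+1)) * f (t+1) * wcomp f k (n+1-(t+1)) = 0
  rw [Finset.sum_range_succ'] at key1
  have hne : (n:ℝ) - (k:ℝ) ≠ 0 := by
    have : (k:ℝ) < (n:ℝ) := by exact_mod_cast hkn
    linarith
  have hT : ∑ s ∈ Finset.Icc 1 n,
        (((k:ℝ)+1) - ((n:ℝ)+1)/((s:ℝ)+1)) * ((s:ℝ)+1) * f (s+1) * wcomp f k (n-s)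
      = ∑ s ∈ Finset.Icc 1 n,
        ((((k:ℝ)+1) * ((s:ℝ)+1) - ((n:ℝ)+1))) * f (s+1) * wcomp f k (n-s) := by
    refine Finset.sum_congr rfl fun s _ => ?_
    have hs : ((s:ℝ)+1) ≠ 0 := by positivity
    field_simp
  have hIco : ∑ s ∈ Finset.Icc 1 n,
        ((((k:ℝ)+1) * ((s:ℝ)+1) - ((n:ℝ)+1))) * f (s+1) * wcomp f k (n-s)
      = ∑ t ∈ Finset.range n,
        ((((k:ℝ)+1) * ((t:ℝ)+2) - ((n:ℝ)+1))) * f (t+2) * wcomp f k (n-(t+1)) := by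
    rw [show Finset.Icc 1 n = Finset.Ico 1 (n+1) from by rw [Finset.Ico_add_one_right_eq_Icc],
      Finset.sum_Ico_eq_sum_range]
    simp only [Nat.add_sub_cancel]
    refine Finset.sum_congr rfl fun t _ => ?_
    rw [show 1 + t = t + 1 from by omega]
    rw [show t + 1 + 1 = t + 2 from rfl]
    push_cast
    ring
  have key2 : ∑ t ∈ Finset.range n,
        ((((k:ℝ)+1) * ((t:ℝ)+2) - ((n:ℝ)+1))) * f (t+2) * wcomp f k (n-(t+1))
      = ((n:ℝ) - (k:ℝ)) * (f 1 * wcomp f k n) := by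
    have hcong : ∀ t ∈ Finset.range n,
        ((↑(n+1):ℝ) - ((k:ℝ)+1) * (↑(t+1+1):ℝ)) * f (t+1+1) * wcomp f k (n+1-(t+1+1))
        = -(((((k:ℝ)+1) * ((t:ℝ)+2) - ((n:ℝ)+1))) * f (t+2) * wcomp f k (n-(t+1))) := by
      intro t _
      rw [show n+1-(t+1+1) = n-(t+1) from by omega, show t+1+1 = t+2 from rfl]
      push_cast
      ring
    rw [Finset.sum_congr rfl hcong, Finset.sum_neg_distrib] at key1
    have hc : (((n+1:ℕ):ℝ) - ((k:ℝ)+1) * ((0+1:ℕ):ℝ)) * f (0+1) * wcomp f k (n+1-(0+1))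
        = ((n:ℝ) - (k:ℝ)) * (f 1 * wcomp f k n) := by
      rw [show n+1-(0+1) = n from by omega]
      push_cast
      ring
    rw [hc] at key1
    linarith
  rw [hT, hIco, key2]
  field_simp
end

section
/- For any function f : ℕ → ℝ and integers k ≥ 1, n ≥ 1, n · C(k,n)_f = k · Σ_{s=1}^{n} s · f(s) · C(k-1, n-s)_f. -/
open Finset

/-- Cons decomposition of a sum over `antidiagonalTuple (k+1) n`. -/
lemma sum_antidiagonalTuple_succ (k n : ℕ) (g : (Fin (k + 1) → ℕ) → ℝ) :
    ∑ π ∈ Finset.Nat.antidiagonalTuple (k + 1) n, g π =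
      ∑ p ∈ Finset.HasAntidiagonal.antidiagonal n,
        ∑ π ∈ Finset.Nat.antidiagonalTuple k p.2, g (Fin.cons p.1 π) := by
  rw [Finset.sum_sigma']
  refine Finset.sum_nbij' (fun π => ⟨(π 0, ∑ i, Fin.tail π i), Fin.tail π⟩)
    (fun x => Fin.cons x.1.1 x.2) ?_ ?_ ?_ ?_ ?_
  · intro π hπ
    rw [Finset.Nat.mem_antidiagonalTuple] at hπ
    simp only [Finset.mem_sigma, Finset.HasAntidiagonal.mem_antidiagonal,
      Finset.Nat.mem_antidiagonalTuple]
    refine ⟨?_, trivial⟩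
    rw [← hπ, Fin.sum_univ_succ]; rfl
  · intro x hx
    rw [Finset.mem_sigma, Finset.HasAntidiagonal.mem_antidiagonal,
      Finset.Nat.mem_antidiagonalTuple] at hx
    rw [Finset.Nat.mem_antidiagonalTuple, Fin.sum_univ_succ]
    simp only [Fin.cons_zero, Fin.cons_succ]
    rw [show (∑ i : Fin k, x.2 i) = x.1.2 from hx.2, hx.1]
  · intro π _; exact Fin.cons_self_tail π
  · intro x hx
    rw [Finset.mem_sigma, Finset.HasAntidiagonal.mem_antidiagonal,
      Finset.Nat.mem_antidiagonalTuple] at hx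
    obtain ⟨⟨s, t⟩, π⟩ := x
    simp only [Fin.cons_zero, Fin.tail_cons]
    simp only [Finset.HasAntidiagonal.mem_antidiagonal] at hx
    rw [show (∑ i : Fin k, π i) = t from hx.2]
  · intro π _
    exact (congrArg g (Fin.cons_self_tail π)).symm

/-- Permutation invariance of a sum over `antidiagonalTuple`. -/
lemma sum_antidiagonalTuple_comp (k n : ℕ) (σ : Equiv.Perm (Fin k))
    (g : (Fin k → ℕ) → ℝ) :
    ∑ π ∈ Finset.Nat.antidiagonalTuple k n, g (π ∘ σ) =
      ∑ π ∈ Finset.Nat.antidiagonalTuple k n, g π := by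
  refine Finset.sum_nbij' (fun π => π ∘ σ) (fun π => π ∘ σ.symm) ?_ ?_ ?_ ?_ ?_
  · intro π hπ
    rw [Finset.Nat.mem_antidiagonalTuple] at hπ ⊢
    rw [← hπ]
    exact Fintype.sum_equiv σ _ _ (fun i => rfl)
  · intro π hπ
    rw [Finset.Nat.mem_antidiagonalTuple] at hπ ⊢
    rw [← hπ]
    exact Fintype.sum_equiv σ.symm _ _ (fun i => rfl)
  · intro π _; ext i; simp
  · intro π _; ext i; simp
  · intro π _; rfl

theorem wcomp_weighted_recurrence (f : ℕ → ℝ) (k n : ℕ) (hk : 1 ≤ k) (hn : 1 ≤ n) :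
    (n : ℝ) * wcomp f k n =
      (k : ℝ) * ∑ s ∈ Finset.Icc 1 n, (s : ℝ) * f s * wcomp f (k - 1) (n - s) := by
  obtain ⟨m, rfl⟩ : ∃ m, k = m + 1 := ⟨k - 1, (Nat.succ_pred_eq_of_pos hk).symm⟩
  simp only [Nat.add_sub_cancel]
  -- T = weighted sum with factor π 0
  set T : ℝ := ∑ π ∈ Finset.Nat.antidiagonalTuple (m + 1) n, (π 0 : ℝ) * ∏ i, f (π i)
    with hT
  have key : (n : ℝ) * wcomp f (m + 1) n = (m + 1 : ℕ) * T := by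
    rw [wcomp, Finset.mul_sum]
    have h1 : ∀ π ∈ Finset.Nat.antidiagonalTuple (m + 1) n,
        (n : ℝ) * ∏ i, f (π i) = ∑ i : Fin (m + 1), (π i : ℝ) * ∏ j, f (π j) := by
      intro π hπ
      rw [Finset.Nat.mem_antidiagonalTuple] at hπ
      rw [← Finset.sum_mul, ← Nat.cast_sum, hπ]
    rw [Finset.sum_congr rfl h1, Finset.sum_comm]
    have h2 : ∀ i : Fin (m + 1),
        ∑ π ∈ Finset.Nat.antidiagonalTuple (m + 1) n, (π i : ℝ) * ∏ j, f (π j) = T := by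
      intro i
      rw [hT, ← sum_antidiagonalTuple_comp (m + 1) n (Equiv.swap 0 i)
        (fun π => (π 0 : ℝ) * ∏ j, f (π j))]
      refine Finset.sum_congr rfl fun π hπ => ?_
      simp only [Function.comp]
      rw [Equiv.swap_apply_left]
      congr 1
      exact Fintype.prod_equiv (Equiv.swap 0 i) _ _ (fun j => by rw [Equiv.swap_apply_self])
    rw [Finset.sum_congr rfl fun i _ => h2 i, Finset.sum_const, Finset.card_univ,
      Fintype.card_fin, nsmul_eq_mul]
  rw [key]
  congr 1
  -- T = ∑ s in Icc 1 n, s * f s * wcomp f m (n - s)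
  rw [hT, sum_antidiagonalTuple_succ m n
    (fun π => (π 0 : ℝ) * ∏ i, f (π i))]
  have h3 : ∀ p ∈ Finset.HasAntidiagonal.antidiagonal n,
      (∑ π ∈ Finset.Nat.antidiagonalTuple m p.2,
        ((Fin.cons p.1 π : Fin (m+1) → ℕ) 0 : ℝ) * ∏ i, f ((Fin.cons p.1 π : Fin (m+1) → ℕ) i))
      = (p.1 : ℝ) * f p.1 * wcomp f m p.2 := by
    intro p hp
    rw [wcomp, Finset.mul_sum]
    refine Finset.sum_congr rfl fun π hπ => ?_
    rw [Fin.prod_univ_succ]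
    simp [mul_assoc]
  rw [Finset.sum_congr rfl h3, Finset.Nat.sum_antidiagonal_eq_sum_range_succ
    (fun s t => (s : ℝ) * f s * wcomp f m t)]
  symm
  refine Finset.sum_subset (fun s hs => ?_) (fun s hs hns => ?_)
  · rw [Finset.mem_Icc] at hs; rw [Finset.mem_range]; omega
  · rw [Finset.mem_range] at hs; rw [Finset.mem_Icc] at hns
    have : s = 0 := by omega
    simp [this]
end

section
/- Fix r ∈ ℕ and let f̃ : ℕ → ℝ agree with f except that f̃(r) = 0. Then for all nonnegative integers k, n: C(k,n)_f = Σ_{i≥0} f(r)^i · binomial(k, i) · C(k-i, n - r·i)_{f̃}, where terms with i > k or r·i > n vanish. -/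
open Finset

open PowerSeries in
lemma wcomp_eq_coeff (f : ℕ → ℝ) (k n : ℕ) :
    wcomp f k n = PowerSeries.coeff n ((PowerSeries.mk f) ^ k) := by
  induction k generalizing n with
  | zero =>
    simp only [wcomp, pow_zero, coeff_one]
    rcases Nat.eq_zero_or_pos n with rfl | hn
    · simp [Finset.Nat.antidiagonalTuple_zero_zero]
    · obtain ⟨m, rfl⟩ := Nat.exists_eq_succ_of_ne_zero hn.ne'
      simp [Finset.Nat.antidiagonalTuple_zero_succ]
  | succ k ih =>
    rw [pow_succ', coeff_mul]
    simp_rw [coeff_mk, ← ih]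
    rw [wcomp]
    rw [show (∑ x ∈ Finset.HasAntidiagonal.antidiagonal n, f x.1 * wcomp f k x.2) =
        ∑ q ∈ (Finset.HasAntidiagonal.antidiagonal n).sigma (fun p => Finset.Nat.antidiagonalTuple k p.2),
          f q.1.1 * ∏ i, f (q.2 i) from by
      rw [Finset.sum_sigma]
      exact Finset.sum_congr rfl fun p _ => by rw [wcomp, Finset.mul_sum]]
    · refine Finset.sum_nbij'
        (i := fun π => (⟨(π 0, ∑ i : Fin k, π i.succ), Fin.tail π⟩ :
          (p : ℕ × ℕ) × (Fin k → ℕ)))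
        (j := fun q => Fin.cons q.1.1 q.2) ?_ ?_ ?_ ?_ ?_
      · intro π hπ
        rw [Finset.Nat.mem_antidiagonalTuple] at hπ
        simp only [Finset.mem_sigma, Finset.Nat.mem_antidiagonalTuple, Finset.HasAntidiagonal.mem_antidiagonal]
        constructor
        · rw [← hπ, Fin.sum_univ_succ]
        · rfl
      · intro q hq
        simp only [Finset.mem_sigma, Finset.Nat.mem_antidiagonalTuple,
          Finset.HasAntidiagonal.mem_antidiagonal] at hq
        rw [Finset.Nat.mem_antidiagonalTuple, Fin.sum_univ_succ]
        simp [hq.2, hq.1]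
      · intro π hπ; exact Fin.cons_self_tail π
      · intro q hq
        simp only [Finset.mem_sigma, Finset.Nat.mem_antidiagonalTuple] at hq
        ext : 1
        · simp [hq.2]
        · simp [Fin.tail_cons]
      · intro π hπ
        rw [Fin.prod_univ_succ]
        rfl
open PowerSeries in
theorem wcomp_extract_part (f : ℕ → ℝ) (r k n : ℕ) :
    wcomp f k n =
      ∑ i ∈ (Finset.range (k + 1)).filter (fun i => r * i ≤ n),
        f r ^ i * (k.choose i : ℝ) * wcomp (Function.update f r 0) (k - i) (n - r * i) := by
  have hsplit : PowerSeries.mk f =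
      PowerSeries.C (f r) * X ^ r + PowerSeries.mk (Function.update f r 0) := by
    ext m
    rw [map_add, coeff_mk, coeff_C_mul, coeff_X_pow, coeff_mk]
    rcases eq_or_ne m r with rfl | h
    · simp [Function.update_self]
    · simp [Function.update_of_ne h, h]
  rw [wcomp_eq_coeff, hsplit, add_pow, map_sum]
  rw [Finset.sum_filter]
  refine Finset.sum_congr rfl fun i hi => ?_
  have hterm : (PowerSeries.C (f r) * X ^ r) ^ i *
      (PowerSeries.mk (Function.update f r 0)) ^ (k - i) * ((k.choose i : ℕ) : ℝ⟦X⟧) =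
      PowerSeries.C (f r ^ i * (k.choose i : ℝ)) *
        ((PowerSeries.mk (Function.update f r 0)) ^ (k - i) * X ^ (r * i)) := by
    rw [mul_pow, ← map_pow, ← pow_mul, map_mul, map_natCast]
    ring
  rw [hterm, coeff_C_mul, coeff_mul_X_pow']
  split_ifs with h
  · rw [wcomp_eq_coeff]
  · ring
end

section
/- For integers n > k ≥ 1 and real x₁ ≠ 0, the partial Bell polynomials satisfy B_{n,k} = (1/(x₁·(n-k))) · Σ_{α=1}^{n-k} binomial(n, α) · ((k+1) - (n+1)/(α+1)) · x_{α+1} · B_{n-α,k}. -/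
open Finset

open Polynomial

noncomputable def Qpoly (x : ℕ → ℝ) (n : ℕ) : Polynomial ℝ :=
  ∑ i ∈ range n, Polynomial.C (x (i+1) / ((i+1).factorial : ℝ)) * Polynomial.X ^ i

lemma prod_range_restrict {M : Type*} [CommMonoid M] (g : ℕ → ℕ → M) (μ : ℕ → ℕ) {c nn : ℕ}
    (hcn : c ≤ nn) (hμ : ∀ i, μ i ≠ 0 → i < c) (hg : ∀ i, g i 0 = 1) :
    ∏ i ∈ range nn, g i (μ i) = ∏ i ∈ range c, g i (μ i) := by
  refine (Finset.prod_subset (range_subset_range.2 hcn) fun i _ hi => ?_).symm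
  have : μ i = 0 := by
    by_contra h; exact hi (mem_range.2 (hμ i h))
  rw [this, hg]

lemma sum_range_restrict {M : Type*} [AddCommMonoid M] (g : ℕ → ℕ → M) (μ : ℕ → ℕ) {c nn : ℕ}
    (hcn : c ≤ nn) (hμ : ∀ i, μ i ≠ 0 → i < c) (hg : ∀ i, g i 0 = 0) :
    ∑ i ∈ range nn, g i (μ i) = ∑ i ∈ range c, g i (μ i) := by
  refine (Finset.sum_subset (range_subset_range.2 hcn) fun i _ hi => ?_).symm
  have : μ i = 0 := by
    by_contra h; exact hi (mem_range.2 (hμ i h))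
  rw [this, hg]

lemma coeff_Qpoly_pow (x : ℕ → ℝ) (n k d : ℕ) :
    (Qpoly x n ^ k).coeff d =
      ∑ μ ∈ (range n).piAntidiag k,
        (if ∑ i ∈ range n, i * μ i = d then
          (Nat.multinomial (range n) μ : ℝ) * ∏ i ∈ range n, (x (i+1) / ((i+1).factorial : ℝ)) ^ μ i
        else 0) := by
  rw [Qpoly, Finset.sum_pow_eq_sum_piAntidiag, Polynomial.finset_sum_coeff]
  refine sum_congr rfl fun μ hμ => ?_
  have hprod : ∏ i ∈ range n, (Polynomial.C (x (i+1) / ((i+1).factorial : ℝ)) * Polynomial.X ^ i) ^ μ i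
      = Polynomial.C (∏ i ∈ range n, (x (i+1) / ((i+1).factorial : ℝ)) ^ μ i)
        * Polynomial.X ^ (∑ i ∈ range n, i * μ i) := by
    simp only [mul_pow]
    rw [Finset.prod_mul_distrib, map_prod]
    congr 1
    · exact Finset.prod_congr rfl fun i _ => by rw [map_pow]
    · rw [← Finset.prod_pow_eq_pow_sum]
      exact Finset.prod_congr rfl fun i _ => by rw [← pow_mul, mul_comm (i : ℕ) (μ i)]
  rw [hprod, ← Polynomial.C_eq_natCast, ← mul_assoc, ← Polynomial.C_mul,
    Polynomial.coeff_C_mul, Polynomial.coeff_X_pow]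
  by_cases h : ∑ i ∈ range n, i * μ i = d
  · rw [if_pos h, if_pos h.symm, mul_one]
  · rw [if_neg h, if_neg (fun hh => h hh.symm), mul_zero]

lemma pBell_eq_coeff (x : ℕ → ℝ) (n k m : ℕ) (hk : 1 ≤ k) (hkm : k ≤ m) (hmn : m ≤ n) :
    pBell x m k = (m.factorial : ℝ) / (k.factorial : ℝ) * ((Qpoly x n ^ k).coeff (m - k)) := by
  have hc1 : m - k + 1 ≤ n := by omega
  rw [coeff_Qpoly_pow, ← Finset.sum_filter, Finset.mul_sum, pBell]
  refine Finset.sum_nbij' (fun ℓ i => if h : i < m - k + 1 then ℓ ⟨i, h⟩ else 0)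
    (fun μ j => μ j.1) ?_ ?_ ?_ ?_ ?_
  · -- forward membership
    intro ℓ hℓ
    rw [Finset.mem_filter] at hℓ
    obtain ⟨-, hsum1, hsum2⟩ := hℓ
    set μ := fun i => if h : i < m - k + 1 then ℓ ⟨i, h⟩ else 0 with hμdef
    have f1 : ∀ i, μ i ≠ 0 → i < m - k + 1 := by
      intro i hi
      by_contra h
      exact hi (dif_neg h)
    have hfin : ∀ (g : ℕ → ℕ → ℕ) (hg : ∀ i, g i 0 = 0),
        ∑ i ∈ range n, g i (μ i) = ∑ j : Fin (m - k + 1), g j.1 (ℓ j) := by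
      intro g hg
      rw [sum_range_restrict g μ hc1 f1 hg, ← Fin.sum_univ_eq_sum_range (fun i => g i (μ i))]
      exact Finset.sum_congr rfl fun j _ => by simp [hμdef, j.2, Fin.is_le j]
    have hs2 : ∑ i ∈ range n, μ i = k := by
      rw [hfin (fun _ t => t) (fun _ => rfl)]; exact hsum2
    have hsplit : ∑ j : Fin (m - k + 1), (j.1 + 1) * ℓ j
        = (∑ j : Fin (m - k + 1), j.1 * ℓ j) + ∑ j : Fin (m - k + 1), ℓ j := by
      rw [← Finset.sum_add_distrib]
      exact Finset.sum_congr rfl fun j _ => by ring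
    have hs1 : ∑ i ∈ range n, i * μ i = m - k := by
      rw [hfin (fun i t => i * t) (fun i => by simp)]
      have := hsplit
      rw [hsum1, hsum2] at this
      omega
    rw [Finset.mem_filter, mem_piAntidiag]
    exact ⟨⟨hs2, fun i hi => mem_range.2 (lt_of_lt_of_le (f1 i hi) hc1)⟩, hs1⟩
  · -- backward membership
    intro μ hμ
    rw [Finset.mem_filter, mem_piAntidiag] at hμ
    obtain ⟨⟨hsum, hsupp⟩, hw⟩ := hμ
    have f2 : ∀ i, μ i ≠ 0 → i < m - k + 1 := by
      intro i hi
      by_contra h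
      push_neg at h
      have hile : i * μ i ≤ ∑ i ∈ range n, i * μ i :=
        Finset.single_le_sum (f := fun i => i * μ i) (fun _ _ => Nat.zero_le _) (hsupp i hi)
      have : i ≤ i * μ i := Nat.le_mul_of_pos_right i (Nat.pos_of_ne_zero hi)
      omega
    have hfin : ∀ (g : ℕ → ℕ → ℕ) (hg : ∀ i, g i 0 = 0),
        ∑ i ∈ range n, g i (μ i) = ∑ j : Fin (m - k + 1), g j.1 (μ j.1) := by
      intro g hg
      rw [sum_range_restrict g μ hc1 f2 hg, ← Fin.sum_univ_eq_sum_range (fun i => g i (μ i))]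
    rw [Finset.mem_filter, Fintype.mem_piFinset]
    refine ⟨fun j => ?_, ?_, ?_⟩
    · rw [mem_range]
      have h3 : μ j.1 ≤ ∑ i ∈ range n, μ i :=
        Finset.single_le_sum (f := fun i => μ i) (fun _ _ => Nat.zero_le _)
          (mem_range.2 (lt_of_lt_of_le j.2 hc1))
      have h4 : μ j.1 ≤ k := le_of_le_of_eq h3 hsum
      exact Nat.lt_succ_of_le (h4.trans hkm)
    · have h1 : ∑ j : Fin (m - k + 1), j.1 * μ j.1 = m - k := by
        rw [← hfin (fun i t => i * t) (fun i => by simp)]; exact hw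
      have h2 : ∑ j : Fin (m - k + 1), μ j.1 = k := by
        rw [← hfin (fun _ t => t) (fun _ => rfl)]; exact hsum
      have hsplit : ∑ j : Fin (m - k + 1), (j.1 + 1) * μ j.1
          = (∑ j : Fin (m - k + 1), j.1 * μ j.1) + ∑ j : Fin (m - k + 1), μ j.1 := by
        rw [← Finset.sum_add_distrib]
        exact Finset.sum_congr rfl fun j _ => by ring
      rw [hsplit, h1, h2]; omega
    · rw [← hfin (fun _ t => t) (fun _ => rfl)]; exact hsum
  · -- left inverse
    intro ℓ _
    funext j
    dsimp only
    rw [dif_pos j.2]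
  · -- right inverse
    intro μ hμ
    rw [Finset.mem_filter, mem_piAntidiag] at hμ
    obtain ⟨⟨hsum, hsupp⟩, hw⟩ := hμ
    have f2 : ∀ i, μ i ≠ 0 → i < m - k + 1 := by
      intro i hi
      by_contra h
      push_neg at h
      have hile : i * μ i ≤ ∑ i ∈ range n, i * μ i :=
        Finset.single_le_sum (f := fun i => i * μ i) (fun _ _ => Nat.zero_le _) (hsupp i hi)
      have : i ≤ i * μ i := Nat.le_mul_of_pos_right i (Nat.pos_of_ne_zero hi)
      omega
    funext i
    dsimp only
    by_cases h : i < m - k + 1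
    · rw [dif_pos h]
    · rw [dif_neg h]
      by_contra hh
      exact h (f2 i fun h0 => hh h0.symm)
  · -- terms equal
    intro ℓ hℓ
    rw [Finset.mem_filter] at hℓ
    obtain ⟨-, hsum1, hsum2⟩ := hℓ
    set μ := fun i => if h : i < m - k + 1 then ℓ ⟨i, h⟩ else 0 with hμdef
    have f1 : ∀ i, μ i ≠ 0 → i < m - k + 1 := by
      intro i hi; by_contra h; exact hi (dif_neg h)
    have hprodfin : ∀ {M : Type} [CommMonoid M] (g : ℕ → ℕ → M) (hg : ∀ i, g i 0 = 1),
        ∏ i ∈ range n, g i (μ i) = ∏ j : Fin (m - k + 1), g j.1 (ℓ j) := by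
      intro M _ g hg
      rw [prod_range_restrict g μ hc1 f1 hg, ← Fin.prod_univ_eq_prod_range (fun i => g i (μ i))]
      exact Finset.prod_congr rfl fun j _ => by simp [hμdef, j.2, Fin.is_le j]
    have hs2 : ∑ i ∈ range n, μ i = k := by
      rw [sum_range_restrict (fun _ t => t) μ hc1 f1 (fun _ => rfl),
        ← Fin.sum_univ_eq_sum_range μ]
      exact (Finset.sum_congr rfl fun j _ => by simp [hμdef, j.2, Fin.is_le j]).trans hsum2
    have hfact : ∏ i ∈ range n, ((μ i).factorial : ℝ) = ∏ j, ((ℓ j).factorial : ℝ) :=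
      hprodfin (fun _ t => (t.factorial : ℝ)) (fun _ => by simp)
    have hxs : ∏ i ∈ range n, (x (i+1) / ((i+1).factorial : ℝ)) ^ μ i
        = ∏ j : Fin (m-k+1), (x (j.1+1) / ((j.1+1).factorial : ℝ)) ^ ℓ j :=
      hprodfin (fun i t => (x (i+1) / ((i+1).factorial : ℝ)) ^ t) (fun _ => by simp)
    have hmult : (Nat.multinomial (range n) μ : ℝ)
        = (k.factorial : ℝ) / ∏ j, ((ℓ j).factorial : ℝ) := by
      have hspec := Nat.multinomial_spec (range n) μ
      rw [hs2] at hspec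
      have := congrArg (fun t : ℕ => (t : ℝ)) hspec
      push_cast at this
      rw [hfact] at this
      have hne : (∏ j, ((ℓ j).factorial : ℝ)) ≠ 0 :=
        Finset.prod_ne_zero_iff.2 fun j _ => Nat.cast_ne_zero.2 (ℓ j).factorial_ne_zero
      field_simp
      linarith [this]
    rw [hxs, hmult]
    have hne : (∏ j, ((ℓ j).factorial : ℝ)) ≠ 0 :=
      Finset.prod_ne_zero_iff.2 fun j _ => Nat.cast_ne_zero.2 (ℓ j).factorial_ne_zero
    have hkne : (k.factorial : ℝ) ≠ 0 := Nat.cast_ne_zero.2 k.factorial_ne_zero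
    field_simp

lemma depril_core (Qp : Polynomial ℝ) (k M : ℕ) (hk : 1 ≤ k) :
    ((M:ℝ)+1) * Qp.coeff 0 * (Qp^k).coeff (M+1) =
      ∑ i ∈ range (M+1),
        (((k:ℝ)+1)*((i:ℝ)+1) - ((M:ℝ)+1)) * Qp.coeff (i+1) * (Qp^k).coeff (M - i) := by
  have hD : derivative (Qp^k) * Qp = C (k:ℝ) * (derivative Qp * Qp^k) := by
    have hp : Qp ^ (k-1) * Qp = Qp ^ k := by rw [← pow_succ, Nat.sub_add_cancel hk]
    rw [Polynomial.derivative_pow]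
    calc C (k:ℝ) * Qp ^ (k-1) * derivative Qp * Qp
        = C (k:ℝ) * (derivative Qp * (Qp ^ (k-1) * Qp)) := by ring
      _ = C (k:ℝ) * (derivative Qp * Qp ^ k) := by rw [hp]
  have E : (∑ i ∈ range (M+1), (Qp^k).coeff (i+1) * ((i:ℝ)+1) * Qp.coeff (M - i))
      = (k:ℝ) * ∑ i ∈ range (M+1), Qp.coeff (i+1) * ((i:ℝ)+1) * (Qp^k).coeff (M - i) := by
    have := congrArg (fun p => Polynomial.coeff p M) hD
    simpa [Polynomial.coeff_mul, Nat.sum_antidiagonal_eq_sum_range_succ_mk,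
      Polynomial.coeff_derivative, Polynomial.coeff_C_mul, Finset.mul_sum] using this
  -- split each summand of the goal
  have e4 : (∑ i ∈ range (M+1),
        (((k:ℝ)+1)*((i:ℝ)+1) - ((M:ℝ)+1)) * Qp.coeff (i+1) * (Qp^k).coeff (M - i))
      = (k:ℝ) * (∑ i ∈ range (M+1), Qp.coeff (i+1) * ((i:ℝ)+1) * (Qp^k).coeff (M - i))
        - ∑ i ∈ range (M+1), ((M:ℝ)-(i:ℝ)) * (Qp.coeff (i+1) * (Qp^k).coeff (M - i)) := by
    rw [Finset.mul_sum, ← Finset.sum_sub_distrib]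
    exact Finset.sum_congr rfl fun i _ => by ring
  have e1 : (∑ i ∈ range (M+1), (Qp^k).coeff (i+1) * ((i:ℝ)+1) * Qp.coeff (M - i))
      = (∑ i ∈ range M, (Qp^k).coeff (i+1) * ((i:ℝ)+1) * Qp.coeff (M - i))
        + (Qp^k).coeff (M+1) * ((M:ℝ)+1) * Qp.coeff 0 := by
    rw [Finset.sum_range_succ, Nat.sub_self]
  have e2 : (∑ i ∈ range (M+1), ((M:ℝ)-(i:ℝ)) * (Qp.coeff (i+1) * (Qp^k).coeff (M - i)))
      = ∑ i ∈ range M, ((M:ℝ)-(i:ℝ)) * (Qp.coeff (i+1) * (Qp^k).coeff (M - i)) := by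
    rw [Finset.sum_range_succ]; simp
  have e3 : (∑ i ∈ range M, (Qp^k).coeff (i+1) * ((i:ℝ)+1) * Qp.coeff (M - i))
      = ∑ i ∈ range M, ((M:ℝ)-(i:ℝ)) * (Qp.coeff (i+1) * (Qp^k).coeff (M - i)) := by
    rw [← Finset.sum_range_reflect (fun i => (Qp^k).coeff (i+1) * ((i:ℝ)+1) * Qp.coeff (M - i)) M]
    refine Finset.sum_congr rfl fun j hj => ?_
    rw [Finset.mem_range] at hj
    have h1 : M - 1 - j + 1 = M - j := by omega
    have h2 : M - (M - 1 - j) = j + 1 := by omega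
    have h3 : ((M - 1 - j : ℕ) : ℝ) + 1 = (M:ℝ) - (j:ℝ) := by
      rw [show M - 1 - j = M - (j+1) by omega, Nat.cast_sub (by omega : j+1 ≤ M)]
      push_cast; ring
    rw [h1, h2, h3]; ring
  rw [e4, ← E, e1, e3, e2]; ring

lemma coeff_Qpoly (x : ℕ → ℝ) (n i : ℕ) (h : i < n) :
    (Qpoly x n).coeff i = x (i+1) / ((i+1).factorial : ℝ) := by
  simp [Qpoly, Polynomial.finset_sum_coeff, Polynomial.coeff_C_mul, Polynomial.coeff_X_pow,
    Finset.sum_ite_eq, h]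


theorem pBell_depril (x : ℕ → ℝ) (n k : ℕ) (hk : 1 ≤ k) (hkn : k < n) (hx : x 1 ≠ 0) :
    pBell x n k =
      1 / (x 1 * ((n : ℝ) - (k : ℝ))) *
        ∑ α ∈ Finset.Icc 1 (n - k),
          (n.choose α : ℝ) * (((k : ℝ) + 1) - ((n : ℝ) + 1) / ((α : ℝ) + 1)) *
            x (α + 1) * pBell x (n - α) k := by
  set M := n - k - 1 with hMdef
  have hM : n - k = M + 1 := by omega
  -- rewrite each summand
  have hterm : ∀ α ∈ Finset.Icc 1 (n - k),
      (n.choose α : ℝ) * (((k : ℝ) + 1) - ((n : ℝ) + 1) / ((α : ℝ) + 1)) *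
          x (α + 1) * pBell x (n - α) k
      = ((((k:ℝ)+1)*(α:ℝ) - ((n:ℝ)-(k:ℝ))) * (Qpoly x n).coeff α * ((Qpoly x n ^ k).coeff (n - k - α)))
          * ((n.factorial : ℝ) / (k.factorial : ℝ)) := by
    intro α hα
    rw [Finset.mem_Icc] at hα
    rw [pBell_eq_coeff x n k (n - α) hk (by omega) (by omega),
      show n - α - k = n - k - α by omega,
      coeff_Qpoly x n α (by omega)]
    have hcc : (n.choose α : ℝ) * (α.factorial : ℝ) * (((n-α).factorial : ℝ)) = (n.factorial : ℝ) := by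
      exact_mod_cast congrArg (fun t : ℕ => (t : ℝ))
        (Nat.choose_mul_factorial_mul_factorial (by omega : α ≤ n))
    have hfs : ((α+1).factorial : ℝ) = ((α:ℝ)+1) * (α.factorial : ℝ) := by
      rw [Nat.factorial_succ]; push_cast; ring
    have hα1 : ((α:ℝ)+1) ≠ 0 := by positivity
    have hαf : (α.factorial : ℝ) ≠ 0 := Nat.cast_ne_zero.2 α.factorial_ne_zero
    have hkf : (k.factorial : ℝ) ≠ 0 := Nat.cast_ne_zero.2 k.factorial_ne_zero
    rw [hfs, ← hcc]
    field_simp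
    ring
  rw [Finset.sum_congr rfl hterm, ← Finset.sum_mul]
  -- convert to range sum
  have hIcc : Finset.Icc 1 (n-k) = Finset.Ico 1 (n-k+1) := by
    rw [Finset.Ico_add_one_right_eq_Icc]
  rw [pBell_eq_coeff x n k n hk hkn.le le_rfl, hIcc, Finset.sum_Ico_eq_sum_range]
  have hrange : n - k + 1 - 1 = M + 1 := by omega
  rw [hrange]
  -- core identity
  have hcore := depril_core (Qpoly x n) k M hk
  have hq0 : (Qpoly x n).coeff 0 = x 1 := by
    rw [coeff_Qpoly x n 0 (by omega)]; simp
  rw [hq0] at hcore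
  have hsum2 : ∑ i ∈ range (M+1),
        ((((k:ℝ)+1)*((1+i:ℕ):ℝ) - ((n:ℝ)-(k:ℝ))) * (Qpoly x n).coeff (1+i) * ((Qpoly x n ^ k).coeff (n - k - (1+i))))
      = ∑ i ∈ range (M+1),
        (((k:ℝ)+1)*((i:ℝ)+1) - ((M:ℝ)+1)) * (Qpoly x n).coeff (i+1) * ((Qpoly x n ^ k).coeff (M - i)) := by
    refine Finset.sum_congr rfl fun i hi => ?_
    rw [Finset.mem_range] at hi
    have h1 : n - k - (1+i) = M - i := by omega
    have h2 : ((n:ℝ)-(k:ℝ)) = (M:ℝ)+1 := by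
      have hn : n = M + 1 + k := by omega
      rw [hn]; push_cast; ring
    rw [h1, h2, show 1+i = i+1 from by omega]
    push_cast
    ring
  rw [hsum2, ← hcore]
  have hMn : ((M:ℝ)+1) ≠ 0 := by positivity
  have hnk : ((n:ℝ)-(k:ℝ)) = (M:ℝ)+1 := by
    have hn : n = M + 1 + k := by omega
    rw [hn]; push_cast; ring
  rw [hnk, hM]
  field_simp
end

section
/- For integers n ≥ k ≥ 0, B_{n,k}(x₁, x₂, ..., x_{n-k+1}) = Σ_{α≥0} binomial(n, α) · x₁^α · B_{n-α,k-α}(0, x₂, ..., x_{n-k+1}), i.e., the Bell polynomial can be expanded by extracting the contribution of the first indeterminate. -/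
open Finset

/-- Like `pBell` but with the length of the tuples decoupled from `n`, `k`. -/
noncomputable def pAux (y : ℕ → ℝ) (d m j : ℕ) : ℝ :=
  ∑ ℓ ∈ (Fintype.piFinset fun _ : Fin (d + 1) => Finset.range (m + 1)).filter
      (fun ℓ => (∑ i, (i.1 + 1) * ℓ i) = m ∧ (∑ i, ℓ i) = j),
    (m.factorial : ℝ) / (∏ i, ((ℓ i).factorial : ℝ)) *
      ∏ i, (y (i.1 + 1) / ((i.1 + 1).factorial : ℝ)) ^ (ℓ i)

lemma pBell_eq_pAux (y : ℕ → ℝ) (m j : ℕ) : pBell y m j = pAux y (m - j) m j := rfl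

lemma pAux_update (x : ℕ → ℝ) (d m j : ℕ) :
    pAux (Function.update x 1 0) d m j =
      ∑ ℓ ∈ ((Fintype.piFinset fun _ : Fin (d + 1) => Finset.range (m + 1)).filter
          (fun ℓ => (∑ i, (i.1 + 1) * ℓ i) = m ∧ (∑ i, ℓ i) = j)).filter
          (fun ℓ => ℓ 0 = 0),
        (m.factorial : ℝ) / (∏ i, ((ℓ i).factorial : ℝ)) *
          ∏ i, (x (i.1 + 1) / ((i.1 + 1).factorial : ℝ)) ^ (ℓ i) := by
  unfold pAux
  conv_rhs => rw [Finset.sum_filter]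
  refine Finset.sum_congr rfl fun ℓ _ => ?_
  by_cases h0 : ℓ 0 = 0
  · rw [if_pos h0]
    congr 1
    refine Finset.prod_congr rfl fun i _ => ?_
    rcases eq_or_ne i 0 with rfl | hi
    · rw [h0]; simp
    · have hv : i.1 ≠ 0 := fun h => hi (Fin.ext (by rw [h, Fin.val_zero]))
      have : (i.1 + 1) ≠ 1 := by omega
      rw [Function.update_of_ne this]
  · rw [if_neg h0]
    refine mul_eq_zero_of_right _ ?_
    apply Finset.prod_eq_zero (Finset.mem_univ (0 : Fin (d + 1)))
    simp [zero_pow h0]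

lemma fiber_eq (x : ℕ → ℝ) (n k α : ℕ) (hαk : α ≤ k) (hkn : k ≤ n) :
    ∑ ℓ ∈ ((Fintype.piFinset fun _ : Fin (n - k + 1) => Finset.range (n + 1)).filter
        (fun ℓ => (∑ i, (i.1 + 1) * ℓ i) = n ∧ (∑ i, ℓ i) = k)).filter (fun ℓ => ℓ 0 = α),
      (n.factorial : ℝ) / (∏ i, ((ℓ i).factorial : ℝ)) *
        ∏ i, (x (i.1 + 1) / ((i.1 + 1).factorial : ℝ)) ^ (ℓ i) =
    (n.choose α : ℝ) * x 1 ^ α * pAux (Function.update x 1 0) (n - k) (n - α) (k - α) := by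
  have hαn : α ≤ n := hαk.trans hkn
  rw [pAux_update, Finset.mul_sum]
  refine Finset.sum_nbij' (i := fun ℓ => Function.update ℓ 0 0)
    (j := fun ℓ => Function.update ℓ 0 α) ?_ ?_ ?_ ?_ ?_
  · -- maps to
    intro ℓ hℓ
    simp only [Finset.mem_filter, Fintype.mem_piFinset, Finset.mem_range] at hℓ ⊢
    obtain ⟨⟨hmem, hsum1, hsum2⟩, h0⟩ := hℓ
    have hbound : ∀ i, Function.update ℓ 0 0 i ≤ k - α := by
      intro i
      have hle : Function.update ℓ 0 0 i ≤ ∑ i', Function.update ℓ 0 0 i' :=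
        Finset.single_le_sum (f := fun i' => Function.update ℓ 0 0 i')
          (fun _ _ => Nat.zero_le _) (Finset.mem_univ i)
      have hupd : ∑ i', Function.update ℓ 0 0 i' = k - α := by
        rw [Fin.sum_univ_succ] at hsum2 ⊢
        simp only [Function.update_self, Function.update_of_ne (Fin.succ_ne_zero _)]
        omega
      omega
    refine ⟨⟨fun i => by have := hbound i; omega, ?_, ?_⟩, ?_⟩
    · rw [Fin.sum_univ_succ] at hsum1 ⊢
      simp only [Function.update_self, Function.update_of_ne (Fin.succ_ne_zero _),
        Fin.val_zero, h0] at hsum1 ⊢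
      omega
    · rw [Fin.sum_univ_succ] at hsum2 ⊢
      simp only [Function.update_self, Function.update_of_ne (Fin.succ_ne_zero _),
        Fin.val_zero, h0] at hsum2 ⊢
      omega
    · simp
  · -- maps back
    intro ℓ hℓ
    simp only [Finset.mem_filter, Fintype.mem_piFinset, Finset.mem_range] at hℓ ⊢
    obtain ⟨⟨hmem, hsum1, hsum2⟩, h0⟩ := hℓ
    refine ⟨⟨?_, ?_, ?_⟩, ?_⟩
    · intro i
      rcases eq_or_ne i 0 with rfl | hi
      · simp only [Function.update_self]; omega
      · rw [Function.update_of_ne hi]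
        have := hmem i
        omega
    · rw [Fin.sum_univ_succ] at hsum1 ⊢
      simp only [Function.update_self, Function.update_of_ne (Fin.succ_ne_zero _),
        Fin.val_zero, h0] at hsum1 ⊢
      omega
    · rw [Fin.sum_univ_succ] at hsum2 ⊢
      simp only [Function.update_self, Function.update_of_ne (Fin.succ_ne_zero _),
        Fin.val_zero, h0] at hsum2 ⊢
      omega
    · simp
  · -- left inverse
    intro ℓ hℓ
    simp only [Finset.mem_filter] at hℓ
    simp only [Function.update_idem]
    rw [← hℓ.2, Function.update_eq_self]
  · -- right inverse
    intro ℓ hℓ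
    simp only [Finset.mem_filter] at hℓ
    simp only [Function.update_idem]
    rw [Function.update_eq_self_iff]; exact hℓ.2.symm
  · -- term equality
    intro ℓ hℓ
    simp only [Finset.mem_filter, Fintype.mem_piFinset, Finset.mem_range] at hℓ
    obtain ⟨⟨hmem, hsum1, hsum2⟩, h0⟩ := hℓ
    have key : (n.factorial : ℝ) = (n.choose α : ℝ) * (α.factorial : ℝ) *
        ((n - α).factorial : ℝ) := by
      exact_mod_cast (Nat.choose_mul_factorial_mul_factorial hαn).symm
    rw [Fin.prod_univ_succ, Fin.prod_univ_succ,
      Fin.prod_univ_succ (f := fun i => ((Function.update ℓ 0 0 i).factorial : ℝ)),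
      Fin.prod_univ_succ (f := fun i =>
        (x (i.1 + 1) / ((i.1 + 1).factorial : ℝ)) ^ (Function.update ℓ 0 0 i))]
    simp only [Function.update_self, Function.update_of_ne (Fin.succ_ne_zero _), h0,
      Fin.val_zero, Nat.factorial_one, Nat.cast_one, div_one, pow_zero, Nat.factorial_zero,
      one_mul, Fin.val_succ]
    have hP : (∏ i : Fin (n - k), ((ℓ i.succ).factorial : ℝ)) ≠ 0 := by
      apply Finset.prod_ne_zero_iff.mpr
      intro i _
      exact_mod_cast Nat.factorial_ne_zero _
    have hα : (α.factorial : ℝ) ≠ 0 := by exact_mod_cast Nat.factorial_ne_zero _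
    rw [key]
    field_simp
    ring

theorem pBell_extract_first (x : ℕ → ℝ) (n k : ℕ) (hkn : k ≤ n) :
    pBell x n k =
      ∑ α ∈ Finset.range (k + 1),
        (n.choose α : ℝ) * x 1 ^ α * pBell (Function.update x 1 0) (n - α) (k - α) := by
  have step1 : ∀ α ∈ Finset.range (k + 1),
      (n.choose α : ℝ) * x 1 ^ α * pBell (Function.update x 1 0) (n - α) (k - α) =
      (n.choose α : ℝ) * x 1 ^ α * pAux (Function.update x 1 0) (n - k) (n - α) (k - α) := by
    intro α hα
    have hαk : α ≤ k := by simpa [Nat.lt_succ_iff] using hα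
    have hd : n - α - (k - α) = n - k := by omega
    rw [pBell_eq_pAux, hd]
  rw [Finset.sum_congr rfl step1]
  unfold pBell
  have hmaps : ∀ ℓ ∈ (Fintype.piFinset fun _ : Fin (n - k + 1) => Finset.range (n + 1)).filter
      (fun ℓ => (∑ i, (i.1 + 1) * ℓ i) = n ∧ (∑ i, ℓ i) = k), ℓ 0 ∈ Finset.range (k + 1) := by
    intro ℓ hℓ
    simp only [Finset.mem_filter, Finset.mem_range] at hℓ ⊢
    have : ℓ 0 ≤ ∑ i, ℓ i :=
      Finset.single_le_sum (f := fun i => ℓ i) (fun _ _ => Nat.zero_le _) (Finset.mem_univ _)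
    omega
  rw [← Finset.sum_fiberwise_of_maps_to hmaps]
  refine Finset.sum_congr rfl fun α hα => ?_
  have hαk : α ≤ k := by simpa [Nat.lt_succ_iff] using hα
  exact fiber_eq x n k α hαk hkn
end

section
/- For k ≥ 1 and n ≥ k+1, the partial Bell polynomial satisfies the nested-sum formula B_{n,k+1} = (1/(k+1)!) · Σ_{α₁=k}^{n-1} Σ_{α₂=k-1}^{α₁-1} ⋯ Σ_{α_k=1}^{α_{k-1}-1} binomial(n,α₁)·binomial(α₁,α₂)⋯binomial(α_{k-1},α_k) · x_{n-α₁}·x_{α₁-α₂}⋯x_{α_{k-1}-α_k}·x_{α_k}. -/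
open Finset

private lemma tele_range (B : ℕ → ℕ) (hB : ∀ t, B (t+1) ≤ B t) (m : ℕ) :
    ∑ t ∈ range m, (B t - B (t+1)) = B 0 - B m := by
  induction m with
  | zero => simp
  | succ m ih =>
    have h1 : B m ≤ B 0 := antitone_nat_of_succ_le hB (Nat.zero_le m)
    have h2 := hB m
    rw [Finset.sum_range_succ, ih]
    omega

private lemma tele_Ico (B : ℕ → ℕ) (hB : ∀ t, B (t+1) ≤ B t) {a b : ℕ} (hab : a ≤ b) :
    ∑ t ∈ Ico a b, (B t - B (t+1)) = B a - B b := by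
  rw [Finset.sum_Ico_eq_sum_range]
  have := tele_range (fun j => B (a + j)) (fun t => hB (a + t)) (b - a)
  simpa [Nat.add_sub_cancel' hab, add_assoc] using this

private lemma chainFact (B : ℕ → ℕ) (hB : ∀ t, B (t+1) ≤ B t) (m : ℕ) :
    (∏ t ∈ range m, (B t).choose (B (t+1))) *
      ((∏ t ∈ range m, (B t - B (t+1)).factorial) * (B m).factorial) = (B 0).factorial := by
  induction m with
  | zero => simp
  | succ m ih =>
    have key := Nat.choose_mul_factorial_mul_factorial (hB m)
    rw [Finset.prod_range_succ, Finset.prod_range_succ, ← ih, ← key]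
    ring


private lemma monomial_eq_C_mul_X (a : ℕ) (c : ℝ) :
    PowerSeries.monomial a c = PowerSeries.C c * (PowerSeries.X) ^ a := by
  ext d
  rw [PowerSeries.coeff_C_mul, PowerSeries.coeff_monomial, PowerSeries.coeff_X_pow]
  split_ifs <;> simp

private lemma monomial_mul_monomial' (a b : ℕ) (c d : ℝ) :
    PowerSeries.monomial a c * PowerSeries.monomial b d =
      PowerSeries.monomial (a + b) (c * d) := by
  rw [monomial_eq_C_mul_X, monomial_eq_C_mul_X, monomial_eq_C_mul_X, pow_add, map_mul]
  ring

private lemma monomial_pow' (a : ℕ) (c : ℝ) (e : ℕ) :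
    (PowerSeries.monomial a c) ^ e = PowerSeries.monomial (a * e) (c ^ e) := by
  induction e with
  | zero => simp
  | succ e ih =>
    rw [pow_succ, ih, monomial_mul_monomial', pow_succ, Nat.mul_succ]

private lemma prod_monomial_pow {ι : Type*} (s : Finset ι) (a : ι → ℕ) (c : ι → ℝ) (e : ι → ℕ) :
    ∏ j ∈ s, (PowerSeries.monomial (a j) (c j)) ^ (e j) =
      PowerSeries.monomial (∑ j ∈ s, a j * e j) (∏ j ∈ s, c j ^ e j) := by
  classical
  induction s using Finset.cons_induction with
  | empty => simp
  | cons i s hi ih =>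
    rw [Finset.prod_cons, ih, Finset.sum_cons, Finset.prod_cons, monomial_pow',
      monomial_mul_monomial']

private lemma coeff_sum_monomial (g : ℕ → ℝ) (M : ℕ) (h0 : g 0 = 0)
    (hM : ∀ m, M < m → g m = 0) (d : ℕ) :
    PowerSeries.coeff d (∑ j : Fin M, PowerSeries.monomial (j.1+1) (g (j.1+1))) = g d := by
  rw [map_sum]
  simp only [PowerSeries.coeff_monomial]
  by_cases hd : 1 ≤ d ∧ d ≤ M
  · rw [Finset.sum_eq_single (⟨d-1, by omega⟩ : Fin M)]
    · simp only [Fin.val_mk]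
      rw [if_pos (by omega)]
      congr 1
      omega
    · intro b _ hb
      rw [if_neg]
      intro h
      exact hb (Fin.ext (by simp only [Fin.val_mk]; omega))
    · intro h
      exact absurd (Finset.mem_univ _) h
  · rw [Finset.sum_eq_zero]
    · rcases Nat.eq_zero_or_pos d with h | h
      · rw [h, h0]
      · exact (hM d (by omega)).symm
    · intro j _
      rw [if_neg]
      have := j.2
      omega

private def Afun (n k : ℕ) (α : Fin k → ℕ) : ℕ → ℕ :=
  fun t => if t = 0 then n else if h : t - 1 < k then α ⟨t-1, h⟩ else 0

private lemma Afun_zero (n k : ℕ) (α : Fin k → ℕ) : Afun n k α 0 = n := if_pos rfl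

private lemma Afun_succ (n k : ℕ) (α : Fin k → ℕ) (t : ℕ) (ht : t < k) :
    Afun n k α (t+1) = α ⟨t, ht⟩ := by
  simp only [Afun]
  rw [if_neg (by omega)]
  simp only [Nat.add_sub_cancel]
  rw [dif_pos ht]

private lemma Afun_big (n k : ℕ) (α : Fin k → ℕ) (t : ℕ) (ht : k < t) :
    Afun n k α t = 0 := by
  simp only [Afun]
  rw [if_neg (by omega), dif_neg (by omega)]

private lemma Afun_mono (n k : ℕ) (α : Fin k → ℕ)
    (hdec : ∀ i : Fin k, ∀ h : i.1 + 1 < k, α ⟨i.1 + 1, h⟩ < α i)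
    (hr : ∀ i, α i < n) : ∀ t, Afun n k α (t+1) ≤ Afun n k α t := by
  intro t
  match t with
  | 0 =>
    rw [Afun_zero]
    by_cases h : 0 < k
    · rw [Afun_succ n k α 0 h]
      exact le_of_lt (hr _)
    · rw [Afun_big n k α 1 (by omega)]
      omega
  | (t+1) =>
    by_cases h : t + 1 < k
    · rw [Afun_succ n k α (t+1) h, Afun_succ n k α t (by omega)]
      exact le_of_lt (hdec ⟨t, by omega⟩ h)
    · rw [Afun_big n k α (t+2) (by omega)]
      omega

private lemma Afun_strict (n k : ℕ) (α : Fin k → ℕ) (hk : 1 ≤ k)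
    (hdec : ∀ i : Fin k, ∀ h : i.1 + 1 < k, α ⟨i.1 + 1, h⟩ < α i)
    (hge : ∀ i : Fin k, k - i.1 ≤ α i)
    (hr : ∀ i, α i < n) : ∀ t, t < k + 1 → Afun n k α (t+1) < Afun n k α t := by
  intro t ht
  match t with
  | 0 =>
    rw [Afun_zero, Afun_succ n k α 0 hk]
    exact hr _
  | (t+1) =>
    by_cases h : t + 1 < k
    · rw [Afun_succ n k α (t+1) h, Afun_succ n k α t (by omega)]
      exact hdec ⟨t, by omega⟩ h
    · have htk : t + 1 = k := by omega
      rw [Afun_big n k α (t+2) (by omega), Afun_succ n k α t (by omega)]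
      have := hge ⟨t, by omega⟩
      simp only [Fin.val_mk] at this
      omega

private lemma nested_eq_wcomp (x : ℕ → ℝ) (k n : ℕ) (hk : 1 ≤ k) (hn : k + 1 ≤ n) :
    ∑ α ∈ (Fintype.piFinset fun _ : Fin k => Finset.range n).filter
        (fun α => (∀ i : Fin k, ∀ h : i.1 + 1 < k, α ⟨i.1 + 1, h⟩ < α i) ∧
          (∀ i : Fin k, k - i.1 ≤ α i) ∧ α ⟨0, hk⟩ ≤ n - 1),
      ((n.choose (α ⟨0, hk⟩) : ℝ) * x (n - α ⟨0, hk⟩)) *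
        ∏ i : Fin k,
          (if h : i.1 + 1 < k then
            ((α i).choose (α ⟨i.1 + 1, h⟩) : ℝ) * x (α i - α ⟨i.1 + 1, h⟩)
          else x (α i)) =
    (n.factorial : ℝ) *
      wcomp (fun m => if 1 ≤ m ∧ m ≤ n - (k+1) + 1 then x m / m.factorial else 0) (k+1) n := by
  unfold wcomp
  rw [← Finset.sum_filter_of_ne (p := fun π : Fin (k+1) → ℕ => ∀ i, π i ≠ 0)
    (fun π _ hne i => ?_)]
  swap
  · -- if some part is zero the product vanishes
    by_contra h
    exact hne (Finset.prod_eq_zero (Finset.mem_univ i) (by rw [h]; norm_num))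
  rw [Finset.mul_sum]
  refine Finset.sum_nbij'
    (i := fun α (i : Fin (k+1)) => Afun n k α i.1 - Afun n k α (i.1+1))
    (j := fun π (i : Fin k) => ∑ t ∈ Ico (i.1+1) (k+1), if h : t < k+1 then π ⟨t, h⟩ else 0)
    ?_ ?_ ?_ ?_ ?_
  · -- hi : image tuple is a positive composition
    intro α hα
    rw [Finset.mem_filter] at hα
    obtain ⟨hpi, hdec, hge, h0⟩ := hα
    rw [Fintype.mem_piFinset] at hpi
    have hr : ∀ i, α i < n := fun i => Finset.mem_range.1 (hpi i)
    have hmono := Afun_mono n k α hdec hr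
    have hstrict := Afun_strict n k α hk hdec hge hr
    rw [Finset.mem_filter]
    constructor
    · rw [Finset.Nat.mem_antidiagonalTuple,
        Fin.sum_univ_eq_sum_range (fun t => Afun n k α t - Afun n k α (t+1)) (k+1),
        tele_range _ hmono, Afun_zero, Afun_big n k α (k+1) (by omega), Nat.sub_zero]
    · intro i
      have := hstrict i.1 i.2
      dsimp only
      omega
  · -- hj
    intro π hπ
    rw [Finset.mem_filter] at hπ
    obtain ⟨hmem, hpos⟩ := hπ
    rw [Finset.Nat.mem_antidiagonalTuple] at hmem
    have hsum' : ∑ t ∈ range (k+1), (if h : t < k+1 then π ⟨t, h⟩ else 0) = n := by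
      rw [Finset.sum_range (f := fun t => if h : t < k+1 then π ⟨t, h⟩ else 0), ← hmem]
      exact Finset.sum_congr rfl fun i _ => by rw [dif_pos i.2, Fin.eta]
    have hpos' : ∀ t, t < k+1 → 1 ≤ (if h : t < k+1 then π ⟨t, h⟩ else 0) := fun t ht => by
      rw [dif_pos ht]
      exact Nat.one_le_iff_ne_zero.2 (hpos ⟨t, ht⟩)
    have hlt : ∀ i : Fin k,
        (∑ t ∈ Ico (i.1+1) (k+1), if h : t < k+1 then π ⟨t, h⟩ else 0) < n := by
      intro i
      have hsplit : ((∑ t ∈ Ico 0 (i.1+1), if h : t < k+1 then π ⟨t, h⟩ else 0) +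
          ∑ t ∈ Ico (i.1+1) (k+1), if h : t < k+1 then π ⟨t, h⟩ else 0) = n := by
        rw [Finset.sum_Ico_consecutive _ (by omega) (by have := i.2; omega : i.1+1 ≤ k+1)]
        rw [← Nat.Ico_zero_eq_range] at hsum'
        exact hsum'
      have h1 : (if h : (0:ℕ) < k+1 then π ⟨0, h⟩ else 0) ≤
          ∑ t ∈ Ico 0 (i.1+1), if h : t < k+1 then π ⟨t, h⟩ else 0 :=
        Finset.single_le_sum (f := fun t => if h : t < k+1 then π ⟨t, h⟩ else 0)
          (s := Ico 0 (i.1+1)) (fun t _ => Nat.zero_le _)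
          (by rw [Finset.mem_Ico]; omega)
      have h2 := hpos' 0 (by omega)
      omega
    rw [Finset.mem_filter]
    refine ⟨?_, ?_, ?_, ?_⟩
    · rw [Fintype.mem_piFinset]
      intro i
      exact Finset.mem_range.2 (hlt i)
    · intro i h
      have hbot := Finset.sum_eq_sum_Ico_succ_bot (show i.1+1 < k+1 by omega)
        (fun t => if h : t < k+1 then π ⟨t, h⟩ else 0)
      have hp := hpos' (i.1+1) (by omega)
      dsimp only at hbot ⊢
      omega
    · intro i
      have hcard := Finset.card_nsmul_le_sum (Ico (i.1+1) (k+1))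
        (fun t => if h : t < k+1 then π ⟨t, h⟩ else 0) 1
        (fun t ht => hpos' t (Finset.mem_Ico.1 ht).2)
      rw [Nat.card_Ico] at hcard
      simp only [smul_eq_mul, mul_one] at hcard
      dsimp only at hcard ⊢
      omega
    · have := hlt ⟨0, hk⟩
      dsimp only at this ⊢
      omega
  · -- left inverse
    intro α hα
    rw [Finset.mem_filter] at hα
    obtain ⟨hpi, hdec, hge, h0⟩ := hα
    rw [Fintype.mem_piFinset] at hpi
    have hr : ∀ i, α i < n := fun i => Finset.mem_range.1 (hpi i)
    have hmono := Afun_mono n k α hdec hr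
    funext i
    dsimp only
    have hstep : ∀ t ∈ Ico (i.1+1) (k+1),
        (if h : t < k+1 then
          Afun n k α (⟨t, h⟩ : Fin (k+1)).1 - Afun n k α ((⟨t, h⟩ : Fin (k+1)).1+1) else 0)
          = Afun n k α t - Afun n k α (t+1) := fun t ht => by
      rw [dif_pos (Finset.mem_Ico.1 ht).2]
    rw [Finset.sum_congr rfl hstep, tele_Ico _ hmono (by have := i.2; omega : i.1+1 ≤ k+1),
      Afun_big n k α (k+1) (by omega), Afun_succ n k α i.1 i.2, Nat.sub_zero, Fin.eta]
  · -- right inverse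
    intro π hπ
    rw [Finset.mem_filter] at hπ
    obtain ⟨hmem, hpos⟩ := hπ
    rw [Finset.Nat.mem_antidiagonalTuple] at hmem
    have hsum' : ∑ t ∈ range (k+1), (if h : t < k+1 then π ⟨t, h⟩ else 0) = n := by
      rw [Finset.sum_range (f := fun t => if h : t < k+1 then π ⟨t, h⟩ else 0), ← hmem]
      exact Finset.sum_congr rfl fun i _ => by rw [dif_pos i.2, Fin.eta]
    funext i
    have hTail : ∀ t, t ≤ k+1 →
        Afun n k (fun (i : Fin k) => ∑ t ∈ Ico (i.1+1) (k+1),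
            if h : t < k+1 then π ⟨t, h⟩ else 0) t
          = ∑ s ∈ Ico t (k+1), (if h : s < k+1 then π ⟨s, h⟩ else 0) := by
      intro t htk
      match t with
      | 0 =>
        rw [Afun_zero]
        rw [← Nat.Ico_zero_eq_range] at hsum'
        exact hsum'.symm
      | (t+1) =>
        by_cases h : t < k
        · rw [Afun_succ n k _ t h]
        · have ht : t = k := by omega
          rw [Afun_big n k _ (t+1) (by omega), ht, Finset.Ico_self, Finset.sum_empty]
    have h1 := hTail i.1 (by have := i.2; omega)
    have h2 := hTail (i.1+1) (by have := i.2; omega)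
    show Afun n k (fun (i : Fin k) => ∑ t ∈ Ico (i.1+1) (k+1),
        if h : t < k+1 then π ⟨t, h⟩ else 0) i.1
      - Afun n k (fun (i : Fin k) => ∑ t ∈ Ico (i.1+1) (k+1),
        if h : t < k+1 then π ⟨t, h⟩ else 0) (i.1+1) = π i
    rw [h1, h2, Finset.sum_eq_sum_Ico_succ_bot (show i.1 < k+1 from i.2)
      (fun s => if h : s < k+1 then π ⟨s, h⟩ else 0)]
    rw [Nat.add_sub_cancel, dif_pos i.2, Fin.eta]
  · -- summand equality
    intro α hα
    rw [Finset.mem_filter] at hα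
    obtain ⟨hpi, hdec, hge, h0⟩ := hα
    rw [Fintype.mem_piFinset] at hpi
    have hr : ∀ i, α i < n := fun i => Finset.mem_range.1 (hpi i)
    have hmono := Afun_mono n k α hdec hr
    have hstrict := Afun_strict n k α hk hdec hge hr
    have hsum : ∑ t ∈ range (k+1), (Afun n k α t - Afun n k α (t+1)) = n := by
      rw [tele_range _ hmono, Afun_zero, Afun_big n k α (k+1) (by omega), Nat.sub_zero]
    have hge1 : ∀ t, t < k+1 → 1 ≤ Afun n k α t - Afun n k α (t+1) := fun t ht => by
      have := hstrict t ht
      omega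
    have hle : ∀ t, t < k+1 → Afun n k α t - Afun n k α (t+1) ≤ n - (k+1) + 1 := by
      intro t ht
      have hmem : t ∈ range (k+1) := Finset.mem_range.2 ht
      have hsplit := Finset.add_sum_erase (range (k+1))
        (fun t => Afun n k α t - Afun n k α (t+1)) hmem
      have hbig := Finset.card_nsmul_le_sum ((range (k+1)).erase t)
        (fun t => Afun n k α t - Afun n k α (t+1)) 1
        (fun s hs => hge1 s (Finset.mem_range.1 (Finset.mem_of_mem_erase hs)))
      rw [Finset.card_erase_of_mem hmem, Finset.card_range] at hbig
      simp only [smul_eq_mul, mul_one] at hbig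
      omega
    have hgv : ∀ i : Fin (k+1),
        (fun m => if 1 ≤ m ∧ m ≤ n - (k+1) + 1 then x m / (m.factorial : ℝ) else 0)
            (Afun n k α i.1 - Afun n k α (i.1+1))
          = (fun t => x (Afun n k α t - Afun n k α (t+1)) /
              ((Afun n k α t - Afun n k α (t+1)).factorial : ℝ)) i.1 := fun i => by
      dsimp only
      rw [if_pos ⟨hge1 i.1 i.2, hle i.1 i.2⟩]
    rw [Finset.prod_congr rfl (fun i _ => hgv i)]
    have hA1 : Afun n k α 1 = α ⟨0, hk⟩ := Afun_succ n k α 0 hk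
    have hterm : ∀ i : Fin k,
        (if h : i.1 + 1 < k then
            ((α i).choose (α ⟨i.1 + 1, h⟩) : ℝ) * x (α i - α ⟨i.1 + 1, h⟩)
          else x (α i))
          = (fun t => ((Afun n k α t).choose (Afun n k α (t+1)) : ℝ) *
              x (Afun n k α t - Afun n k α (t+1))) (i.1+1) := by
      intro i
      dsimp only
      by_cases h : i.1 + 1 < k
      · rw [dif_pos h, Afun_succ n k α i.1 i.2, Afun_succ n k α (i.1+1) h, Fin.eta]
      · rw [dif_neg h, Afun_succ n k α i.1 i.2, Fin.eta,
          Afun_big n k α (i.1+1+1) (by omega), Nat.choose_zero_right, Nat.cast_one, one_mul,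
          Nat.sub_zero]
    rw [Finset.prod_congr rfl (fun i _ => hterm i)]
    rw [Fin.prod_univ_eq_prod_range (fun t => ((Afun n k α (t+1)).choose (Afun n k α (t+1+1)) : ℝ) *
        x (Afun n k α (t+1) - Afun n k α (t+1+1))) k]
    rw [Fin.prod_univ_eq_prod_range (fun t => x (Afun n k α t - Afun n k α (t+1)) /
        ((Afun n k α t - Afun n k α (t+1)).factorial : ℝ)) (k+1)]
    rw [show (n.choose (α ⟨0, hk⟩) : ℝ) * x (n - α ⟨0, hk⟩)
        = ((Afun n k α 0).choose (Afun n k α 1) : ℝ) * x (Afun n k α 0 - Afun n k α 1) by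
      rw [Afun_zero, hA1]]
    rw [mul_comm (((Afun n k α 0).choose (Afun n k α 1) : ℝ) * x (Afun n k α 0 - Afun n k α 1))]
    rw [show (∏ i ∈ range k, (((Afun n k α (i+1)).choose (Afun n k α (i+1+1)) : ℝ) *
          x (Afun n k α (i+1) - Afun n k α (i+1+1))))
        = ∏ i ∈ range k, (fun t => ((Afun n k α t).choose (Afun n k α (t+1)) : ℝ) *
            x (Afun n k α t - Afun n k α (t+1))) (i+1) from rfl]
    rw [← Finset.prod_range_succ' (fun t => ((Afun n k α t).choose (Afun n k α (t+1)) : ℝ) *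
        x (Afun n k α t - Afun n k α (t+1))) k]
    rw [Finset.prod_mul_distrib]
    have hch := chainFact (Afun n k α) hmono (k+1)
    rw [Afun_zero, Afun_big n k α (k+1) (by omega), Nat.factorial_zero, mul_one] at hch
    have hchR : ((∏ t ∈ range (k+1), (Afun n k α t).choose (Afun n k α (t+1)) : ℕ) : ℝ) *
        ((∏ t ∈ range (k+1), (Afun n k α t - Afun n k α (t+1)).factorial : ℕ) : ℝ)
        = (n.factorial : ℝ) := by exact_mod_cast congrArg (Nat.cast (R := ℝ)) hch
    push_cast at hchR
    rw [Finset.prod_div_distrib]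
    have hdne : (∏ t ∈ range (k+1), ((Afun n k α t - Afun n k α (t+1)).factorial : ℝ)) ≠ 0 := by
      positivity
    rw [← hchR, mul_assoc,
      mul_comm (∏ t ∈ range (k+1), ((Afun n k α t - Afun n k α (t+1)).factorial : ℝ)),
      div_mul_cancel₀ _ hdne]

private noncomputable def toFinsupp (K : ℕ) (π : Fin K → ℕ) : ℕ →₀ ℕ :=
  Finsupp.onFinset (range K) (fun m => if h : m < K then π ⟨m, h⟩ else 0)
    (fun m hm => by
      rw [Finset.mem_range]
      by_contra h
      exact hm (dif_neg h))

private lemma wcomp_eq_coeff_s18 (g : ℕ → ℝ) (M K n : ℕ) (h0 : g 0 = 0)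
    (hM : ∀ m, M < m → g m = 0) :
    wcomp g K n = PowerSeries.coeff n
      ((∑ j : Fin M, PowerSeries.monomial (j.1+1) (g (j.1+1))) ^ K) := by
  rw [PowerSeries.coeff_pow]
  rw [Finset.sum_congr rfl fun l _ =>
    Finset.prod_congr rfl fun i (_ : i ∈ range K) => coeff_sum_monomial g M h0 hM (l i)]
  unfold wcomp
  refine Finset.sum_nbij' (i := fun π => toFinsupp K π) (j := fun l (i : Fin K) => l i.1)
    ?_ ?_ ?_ ?_ ?_
  · intro π hπ
    rw [Finset.mem_finsuppAntidiag]
    refine ⟨?_, Finsupp.support_onFinset_subset⟩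
    rw [Finset.Nat.mem_antidiagonalTuple] at hπ
    rw [← hπ, Finset.sum_range (f := fun m => toFinsupp K π m)]
    exact Finset.sum_congr rfl fun i _ => by
      show (if h : i.1 < K then π ⟨i.1, h⟩ else 0) = π i
      rw [dif_pos i.2, Fin.eta]
  · intro l hl
    rw [Finset.mem_finsuppAntidiag] at hl
    rw [Finset.Nat.mem_antidiagonalTuple, ← hl.1, ← Finset.sum_range (f := fun m => l m)]
  · intro π _
    funext i
    show (if h : i.1 < K then π ⟨i.1, h⟩ else 0) = π i
    rw [dif_pos i.2, Fin.eta]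
  · intro l hl
    rw [Finset.mem_finsuppAntidiag] at hl
    ext m
    show (if h : m < K then l m else 0) = l m
    by_cases h : m < K
    · rw [dif_pos h]
    · rw [dif_neg h]
      symm
      rw [← Finsupp.notMem_support_iff]
      intro hc
      exact h (Finset.mem_range.1 (hl.2 hc))
  · intro π _
    rw [Finset.prod_range (f := fun m => g (toFinsupp K π m))]
    exact Finset.prod_congr rfl fun i _ => by
      show g (π i) = g (if h : i.1 < K then π ⟨i.1, h⟩ else 0)
      rw [dif_pos i.2, Fin.eta]

private lemma pBell_eq_wcomp (x : ℕ → ℝ) (K n : ℕ) (hK : 1 ≤ K) (hn : K ≤ n) :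
    pBell x n K = (n.factorial : ℝ) / (K.factorial : ℝ) *
      wcomp (fun m => if 1 ≤ m ∧ m ≤ n - K + 1 then x m / m.factorial else 0) K n := by
  have hg0 : (fun m => if 1 ≤ m ∧ m ≤ n - K + 1 then x m / m.factorial else 0) 0 = 0 := by
    norm_num
  have hgM : ∀ m, n - K + 1 < m →
      (fun m => if 1 ≤ m ∧ m ≤ n - K + 1 then x m / m.factorial else 0) m = 0 := fun m hm => by
    dsimp only; rw [if_neg (by omega)]
  rw [wcomp_eq_coeff_s18 _ (n - K + 1) K n hg0 hgM]
  rw [Finset.sum_pow_eq_sum_piAntidiag, map_sum]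
  have step : ∀ ℓ ∈ piAntidiag (univ : Finset (Fin (n - K + 1))) K,
      PowerSeries.coeff n ((Nat.multinomial univ ℓ : PowerSeries ℝ) *
        ∏ j, (PowerSeries.monomial (j.1+1)
          ((fun m => if 1 ≤ m ∧ m ≤ n - K + 1 then x m / m.factorial else 0) (j.1+1))) ^ (ℓ j))
      = if (∑ j, (j.1+1) * ℓ j) = n then (Nat.multinomial univ ℓ : ℝ) *
          ∏ j, ((fun m => if 1 ≤ m ∧ m ≤ n - K + 1 then x m / m.factorial else 0) (j.1+1)) ^ (ℓ j)
        else 0 := by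
    intro ℓ _
    rw [← map_natCast (PowerSeries.C (R := ℝ)), PowerSeries.coeff_C_mul, prod_monomial_pow,
      PowerSeries.coeff_monomial]
    rcases eq_or_ne (∑ j, (j.1+1) * ℓ j) n with h | h
    · rw [if_pos h.symm, if_pos h]
    · rw [if_neg (Ne.symm h), if_neg h, mul_zero]
  rw [Finset.sum_congr rfl step, ← Finset.sum_filter]
  have hsets : (Fintype.piFinset fun _ : Fin (n - K + 1) => range (n+1)).filter
        (fun ℓ => (∑ j, (j.1+1) * ℓ j) = n ∧ (∑ j, ℓ j) = K) =
      (piAntidiag (univ : Finset (Fin (n - K + 1))) K).filter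
        (fun ℓ => (∑ j, (j.1+1) * ℓ j) = n) := by
    ext ℓ
    simp only [Finset.mem_filter, Fintype.mem_piFinset, Finset.mem_range, Finset.mem_piAntidiag,
      Finset.mem_univ, implies_true, and_true]
    constructor
    · rintro ⟨_, h1, h2⟩
      exact ⟨h2, h1⟩
    · rintro ⟨h2, h1⟩
      refine ⟨fun j => ?_, h1, h2⟩
      have : ℓ j ≤ univ.sum ℓ := Finset.single_le_sum (fun i _ => Nat.zero_le (ℓ i)) (mem_univ j)
      omega
  rw [pBell, hsets, Finset.mul_sum]
  refine Finset.sum_congr rfl fun ℓ hℓ => ?_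
  rw [Finset.mem_filter, Finset.mem_piAntidiag] at hℓ
  obtain ⟨⟨hsum, -⟩, -⟩ := hℓ
  have hspec : (∏ j, ((ℓ j).factorial : ℝ)) * (Nat.multinomial univ ℓ : ℝ) = K.factorial := by
    have := Nat.multinomial_spec (univ : Finset (Fin (n - K + 1))) ℓ
    rw [hsum] at this
    exact_mod_cast congrArg (Nat.cast (R := ℝ)) this
  have hx : ∀ j : Fin (n - K + 1),
      ((fun m => if 1 ≤ m ∧ m ≤ n - K + 1 then x m / m.factorial else 0) (j.1+1)) ^ (ℓ j)
        = (x (j.1+1) / ((j.1+1).factorial : ℝ)) ^ (ℓ j) := fun j => by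
    dsimp only
    rw [if_pos ⟨by omega, by omega⟩]
  rw [Finset.prod_congr rfl fun j _ => hx j]
  have h1 : (∏ j, ((ℓ j).factorial : ℝ)) ≠ 0 := by positivity
  have h2 : ((K.factorial : ℝ)) ≠ 0 := by positivity
  have key : (n.factorial : ℝ) / (∏ j, ((ℓ j).factorial : ℝ)) =
      (n.factorial : ℝ) / (K.factorial : ℝ) * (Nat.multinomial univ ℓ : ℝ) := by
    rw [div_eq_iff h1, div_mul_eq_mul_div, div_mul_eq_mul_div, mul_assoc,
      mul_comm (Nat.multinomial univ ℓ : ℝ) _, hspec, mul_div_assoc, div_self h2, mul_one]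
  rw [key, mul_assoc]

theorem pBell_nested_sum (x : ℕ → ℝ) (k n : ℕ) (hk : 1 ≤ k) (hn : k + 1 ≤ n) :
    pBell x n (k + 1) =
      1 / ((k + 1).factorial : ℝ) *
        ∑ α ∈ (Fintype.piFinset fun _ : Fin k => Finset.range n).filter
            (fun α => (∀ i : Fin k, ∀ h : i.1 + 1 < k, α ⟨i.1 + 1, h⟩ < α i) ∧
              (∀ i : Fin k, k - i.1 ≤ α i) ∧ α ⟨0, hk⟩ ≤ n - 1),
          ((n.choose (α ⟨0, hk⟩) : ℝ) * x (n - α ⟨0, hk⟩)) *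
            ∏ i : Fin k,
              if h : i.1 + 1 < k then
                ((α i).choose (α ⟨i.1 + 1, h⟩) : ℝ) * x (α i - α ⟨i.1 + 1, h⟩)
              else x (α i) := by
  rw [pBell_eq_wcomp x (k+1) n (by omega) hn]
  rw [nested_eq_wcomp x k n hk hn]
  ring
end
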